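/- Let n and k be integers with 1 ≤ k ≤ n−2, and let α and β be partitions in the (k+1)×(n−k) box satisfying ((k+1)(n−k) − |α|) + ((k+1)(n−k) − |β|) ≤ n+1 (i.e., the sum of the codimensions of the corresponding Schubert varieties in the Grassmannian G(k,n) is at most n+1). Then α∨ ≤ β fails if and only if the unordered pair {α, β} equals {(n−k−1, …, n−k−1), (n−k, …, n−k, 0)}, where (n−k−1, …, n−k−1) has all k+1 parts equal to n−k−1 and (n−k, …, n−k, 0) has the first k parts equal to n−k and the last part 0. (This is the combinatorial form, via the Richardson nonvanishing criterion for products of Schubert classes, of the statement that the only Schubert md-pair in G(k,n) is {[X_H],[X_p]}.) -/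

import Mathlib

/-- A partition in the `(k+1) × (n-k)` box: a weakly decreasing sequence
`λ_1 ≥ … ≥ λ_{k+1}` (indexed by `Fin (k+1)`) with all parts at most `n - k`. -/
def IsBoxPartition (n k : ℕ) (lam : Fin (k + 1) → ℕ) : Prop :=
  (∀ i, lam i ≤ n - k) ∧ Antitone lam

/-- The dual partition `λ∨`, given (1-based) by `(λ∨)_j = n - k - λ_{k+2-j}`. -/
def boxDual (n k : ℕ) (lam : Fin (k + 1) → ℕ) : Fin (k + 1) → ℕ :=
  fun j => (n - k) - lam ⟨k - (j : ℕ), Nat.lt_succ_of_le (Nat.sub_le k j)⟩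

/-! Write `m = n - k`. A failure of `α∨ ≤ β` is a pair of rows `i + j = k` with
`α i + β j < m`. Since `α` is antitone, the complement of its diagram contains the
`(j + 1) × (m - α i)` rectangle, and likewise the complement of `β` contains an
`(i + 1) × (m - β j)` rectangle. These two widths add up to more than `m`, so the codimension
bound `n + 1 = k + m + 1` can only hold if one of the rectangles is a single row, i.e. `i = 0`
or `j = 0`; and then the bound is attained only when the two complements are exactly
the rectangles `(k + 1) × 1` and `1 × m`. -/

open Finset

lemma boxDual_apply (n k : ℕ) (lam : Fin (k + 1) → ℕ) (j : Fin (k + 1)) :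
    boxDual n k lam j = n - k - lam j.rev := by
  simp only [boxDual, Fin.rev]
  congr 3
  omega

lemma Monotone.card_sub_nsmul_le_sum {M : Type*} [AddCommMonoid M] [PartialOrder M]
    [IsOrderedAddMonoid M] [CanonicallyOrderedAdd M] {N : ℕ} {f : Fin N → M}
    (hf : Monotone f) (i : Fin N) : (N - i) • f i ≤ ∑ t, f t :=
  calc (N - i) • f i = #(Ici i) • f i := by rw [Fin.card_Ici]
    _ ≤ ∑ t ∈ Ici i, f t := card_nsmul_le_sum _ _ _ fun t ht ↦ hf (mem_Ici.mp ht)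
    _ ≤ ∑ t, f t := sum_le_univ_sum_of_nonneg fun _ ↦ zero_le

lemma Fintype.eq_of_le_of_sum_le {ι M : Type*} [Fintype ι] [AddCommMonoid M] [PartialOrder M]
    [IsOrderedCancelAddMonoid M] {f g : ι → M} (hfg : ∀ t, f t ≤ g t)
    (hsum : ∑ t, g t ≤ ∑ t, f t) : f = g :=
  funext fun t ↦ (sum_eq_sum_iff_of_le fun t _ ↦ hfg t).1
    (le_antisymm (sum_le_sum fun t _ ↦ hfg t) hsum) t (mem_univ t)

lemma Fin.mul_sub_sum_eq_sum_sub {N m : ℕ} {lam : Fin N → ℕ} (h : ∀ t, lam t ≤ m) :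
    N * m - ∑ t, lam t = ∑ t, (m - lam t) := by
  rw [sum_tsub_distrib _ fun t _ ↦ h t, sum_const, smul_eq_mul]

namespace BoxPartition

variable {k m : ℕ} {α β : Fin (k + 1) → ℕ}

lemma mul_le_codim (hα : Antitone α) (i : Fin (k + 1)) :
    (k + 1 - i) * (m - α i) ≤ ∑ t, (m - α t) := by
  simpa only [smul_eq_mul] using
    Monotone.card_sub_nsmul_le_sum (f := fun t ↦ m - α t)
      (fun _ _ hst ↦ Nat.sub_le_sub_left (hα hst) m) i

lemma eq_zero_or_eq_zero_of_add_lt (hm : 2 ≤ m) (hα : Antitone α) (hβ : Antitone β)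
    (hcodim : ∑ t, (m - α t) + ∑ t, (m - β t) ≤ k + m + 1)
    {i j : Fin (k + 1)} (hij : (i : ℕ) + j = k) (hlt : α i + β j < m) :
    i = 0 ∨ j = 0 := by
  have hi := mul_le_codim (m := m) hα i
  have hj := mul_le_codim (m := m) hβ j
  rw [show k + 1 - (i : ℕ) = j + 1 by omega] at hi
  rw [show k + 1 - (j : ℕ) = i + 1 by omega] at hj
  obtain ⟨a, ha⟩ : ∃ a, m - α i = a + 1 := ⟨m - α i - 1, by omega⟩
  obtain ⟨b, hb⟩ : ∃ b, m - β j = b + 1 := ⟨m - β j - 1, by omega⟩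
  have hab : m ≤ a + b + 1 := by omega
  rw [ha] at hi
  rw [hb] at hj
  by_contra! h
  obtain ⟨hi0, hj0⟩ := h
  -- the two bounds add up to `j * a + i * b ≤ 0`, while `a + b ≥ m - 1 ≥ 1`
  have hbi : b ≤ i * b :=
    Nat.le_mul_of_pos_left b (Nat.pos_of_ne_zero (Fin.val_ne_zero_iff.mpr hi0))
  have haj : a ≤ j * a :=
    Nat.le_mul_of_pos_left a (Nat.pos_of_ne_zero (Fin.val_ne_zero_iff.mpr hj0))
  linarith

lemma eq_of_add_lt_of_codim_le (hk : 1 ≤ k) (hα : Antitone α) (hβ : Antitone β)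
    (hαm : ∀ t, α t ≤ m) (hβm : ∀ t, β t ≤ m)
    (hcodim : ∑ t, (m - α t) + ∑ t, (m - β t) ≤ k + m + 1)
    (hlt : α 0 + β (Fin.last k) < m) :
    α = (fun _ ↦ m - 1) ∧ β = fun t : Fin (k + 1) ↦ if (t : ℕ) = k then 0 else m := by
  have h0 := mul_le_codim (m := m) hα 0
  have hlast := mul_le_codim (m := m) hβ (Fin.last k)
  rw [Fin.val_zero, Nat.sub_zero] at h0
  rw [Fin.val_last, Nat.add_sub_cancel_left, one_mul] at hlast
  obtain ⟨a, ha⟩ : ∃ a, m - α 0 = a + 1 := ⟨m - α 0 - 1, by omega⟩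
  have ha0 : a = 0 := by
    rw [ha] at h0
    have : m ≤ m - β (Fin.last k) + a := by omega
    have : k * a ≤ 0 := by linarith
    simpa only [nonpos_iff_eq_zero, mul_eq_zero, Nat.pos_iff_ne_zero.mp hk, false_or] using this
  have hαle : ∀ t, 1 ≤ m - α t := fun t ↦ by have := hα (Fin.zero_le t); omega
  have hβle : ∀ t : Fin (k + 1), (if (t : ℕ) = k then m else 0) ≤ m - β t := fun t ↦ by
    split_ifs with ht
    · obtain rfl : t = Fin.last k := Fin.ext ht
      omega
    · exact Nat.zero_le _
  have hsumα : ∑ _t : Fin (k + 1), 1 = k + 1 := by simp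
  have hsumβ : ∑ t : Fin (k + 1), (if (t : ℕ) = k then m else 0) = m := by
    refine (Fintype.sum_eq_single (Fin.last k) fun t ht ↦ ?_).trans (if_pos rfl)
    exact if_neg fun h ↦ ht (Fin.ext h)
  have hα_le := sum_le_sum fun t (_ : t ∈ univ) ↦ hαle t
  have hβ_le := sum_le_sum fun t (_ : t ∈ univ) ↦ hβle t
  have hαeq := Fintype.eq_of_le_of_sum_le hαle (by omega)
  have hβeq := Fintype.eq_of_le_of_sum_le hβle (by omega)
  constructor
  · funext t
    have := congrFun hαeq t
    have := hαm t
    omega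
  · funext t
    have := congrFun hβeq t
    have := hβm t
    split_ifs at * <;> omega

end BoxPartition

open BoxPartition in
/-- Theorem 3.1 in combinatorial form: for partitions `α, β` in the
`(k+1) × (n-k)` box whose associated Schubert varieties in `G(k,n)` have
codimensions summing to at most `n+1`, the containment `α∨ ≤ β` fails (i.e.
the product of the two Schubert classes vanishes, by the Richardson criterion)
iff `{α, β} = {(n-k-1,…,n-k-1), (n-k,…,n-k,0)} = {λ_{I_H}, λ_{I_p}}`. -/
theorem schubert_md_pair (n k : ℕ) (hk : 1 ≤ k) (hkn : k + 2 ≤ n)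
    (alpha beta : Fin (k + 1) → ℕ)
    (halpha : IsBoxPartition n k alpha) (hbeta : IsBoxPartition n k beta)
    (hcodim : ((k + 1) * (n - k) - ∑ i, alpha i) +
        ((k + 1) * (n - k) - ∑ i, beta i) ≤ n + 1) :
    (¬ ∀ i, boxDual n k alpha i ≤ beta i) ↔
      ((alpha = fun _ => n - k - 1) ∧
        (beta = fun i : Fin (k + 1) => if (i : ℕ) = k then 0 else n - k)) ∨
      ((alpha = fun i : Fin (k + 1) => if (i : ℕ) = k then 0 else n - k) ∧
        (beta = fun _ => n - k - 1)) := by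
  obtain ⟨hαm, hα⟩ := halpha
  obtain ⟨hβm, hβ⟩ := hbeta
  set m := n - k
  rw [Fin.mul_sub_sum_eq_sum_sub hαm, Fin.mul_sub_sum_eq_sum_sub hβm,
    show n + 1 = k + m + 1 by omega] at hcodim
  constructor
  · intro h
    simp only [not_forall, not_le, boxDual_apply] at h
    obtain ⟨j, hj⟩ := h
    have hlt : alpha j.rev + beta j < m := by omega
    rcases eq_zero_or_eq_zero_of_add_lt (by omega) hα hβ hcodim
      (by rw [Fin.val_rev]; omega) hlt with hrev | rfl
    · obtain rfl : j = Fin.last k := by rwa [Fin.rev_eq_iff, Fin.rev_zero] at hrev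
      exact .inl <| eq_of_add_lt_of_codim_le hk hα hβ hαm hβm hcodim (by simpa using hlt)
    · exact .inr <| (eq_of_add_lt_of_codim_le hk hβ hα hβm hαm (by omega)
        (by rwa [Fin.rev_zero, add_comm] at hlt)).symm
  · rintro (⟨rfl, rfl⟩ | ⟨rfl, rfl⟩) h
    · have := h (Fin.last k)
      simp only [boxDual_apply, Fin.val_last, if_pos] at this
      omega
    · have := h 0
      simp only [boxDual_apply, Fin.rev_zero, Fin.val_last, if_pos] at this
      omega
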